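/- arXiv:2009.07048 — 8 statements merged into one kernel-verified Lean document; each statement's English description precedes it below -/
import Mathlib

section
/- The 4×4 integer matrix M = [[1,2,2,2],[0,2,1,0],[1,2,1,1],[1,1,1,1]] has characteristic polynomial with roots exactly τ³, τ, σ, σ³, where τ = (1+√5)/2 and σ = (1−√5)/2. -/
/-!
The characteristic polynomial factors as `(x² - 4x - 1)(x² - x - 1)`. The second factor has
roots `φ, ψ`; since `φ³ = 2φ + 1` and `ψ³ = 2ψ + 1`, the cubes have sum `4` and product `-1`,
so they are the roots of the first.
-/

open Polynomial Real goldenRatio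

theorem Matrix.eval_charpoly_inflation {R : Type*} [CommRing R] (x : R) :
    (!![1,2,2,2; 0,2,1,0; 1,2,1,1; 1,1,1,1] : Matrix (Fin 4) (Fin 4) R).charpoly.eval x =
      (x ^ 2 - 4 * x - 1) * (x ^ 2 - x - 1) := by
  rw [Matrix.eval_charpoly, Matrix.det_succ_row_zero]
  simp [Fin.sum_univ_succ, Matrix.det_fin_three, Fin.succAbove]
  ring

theorem sub_mul_sub_eq_of_add_of_mul {R : Type*} [CommRing R] {a b s p : R}
    (hs : a + b = s) (hp : a * b = p) (x : R) :
    (x - a) * (x - b) = x ^ 2 - s * x + p := by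
  linear_combination (-x) * hs + hp

theorem Real.goldenRatio_pow_three : φ ^ 3 = 2 * φ + 1 := by
  linear_combination (φ + 1) * goldenRatio_sq

theorem Real.goldenConj_pow_three : ψ ^ 3 = 2 * ψ + 1 := by
  linear_combination (ψ + 1) * goldenConj_sq

theorem Real.sq_sub_sub_one_eq (x : ℝ) : x ^ 2 - x - 1 = (x - φ) * (x - ψ) := by
  rw [sub_mul_sub_eq_of_add_of_mul goldenRatio_add_goldenConj goldenRatio_mul_goldenConj]
  ring

theorem Real.sq_sub_four_mul_sub_one_eq (x : ℝ) :
    x ^ 2 - 4 * x - 1 = (x - φ ^ 3) * (x - ψ ^ 3) := by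
  have hs : φ ^ 3 + ψ ^ 3 = 4 := by
    linear_combination goldenRatio_pow_three + goldenConj_pow_three + 2 * goldenRatio_add_goldenConj
  have hp : φ ^ 3 * ψ ^ 3 = -1 := by
    rw [← mul_pow, goldenRatio_mul_goldenConj]
    norm_num
  rw [sub_mul_sub_eq_of_add_of_mul hs hp]
  ring

theorem inflation_matrix_eigenvalues
    (τ σ : ℝ) (hτ : τ = (1 + Real.sqrt 5) / 2) (hσ : σ = (1 - Real.sqrt 5) / 2)
    (M : Matrix (Fin 4) (Fin 4) ℝ)
    (hM : M = !![1,2,2,2; 0,2,1,0; 1,2,1,1; 1,1,1,1]) :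
    ∀ x : ℝ, M.charpoly.IsRoot x ↔ (x = τ ^ 3 ∨ x = τ ∨ x = σ ∨ x = σ ^ 3) := by
  obtain rfl : τ = φ := hτ
  obtain rfl : σ = ψ := hσ
  intro x
  rw [IsRoot.def, hM, Matrix.eval_charpoly_inflation, sq_sub_four_mul_sub_one_eq,
    sq_sub_sub_one_eq]
  simp only [mul_eq_zero, sub_eq_zero, or_assoc]
  tauto
end

section
/- The vector v = (σ², −σ³/2, (4σ+3)/2, −σ³), with σ = (1−√5)/2, satisfies Mv = τ³v for M = [[1,2,2,2],[0,2,1,0],[1,2,1,1],[1,1,1,1]] and τ = (1+√5)/2, and the entries of v sum to 1. -/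
/-!
σ is a root of x² = x + 1 and τ = 1 - σ. Modulo this relation every entry of v is affine in σ
(σ³ = 2σ + 1) and τ³ = 3 - 2σ, so each row of Mv = τ³v, as well as the normalisation, differs
by a constant multiple of σ² - σ - 1; hence both hold for any root of x² = x + 1 in any field of
characteristic zero.
-/

section GoldenRoot

variable {R : Type*} [CommRing R] {σ : R}

lemma pow_three_eq_of_sq_eq_add_one (hσ : σ ^ 2 = σ + 1) : σ ^ 3 = 2 * σ + 1 := by
  linear_combination (σ + 1) * hσ

lemma one_sub_pow_three_eq_of_sq_eq_add_one (hσ : σ ^ 2 = σ + 1) :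
    (1 - σ) ^ 3 = 3 - 2 * σ := by
  linear_combination (2 - σ) * hσ

end GoldenRoot

section MosseriSadoc

open Matrix

variable {K : Type*} [Field K] {σ : K}

variable (K) in
def mosseriSadocInflationMatrix : Matrix (Fin 4) (Fin 4) K :=
  !![1,2,2,2; 0,2,1,0; 1,2,1,1; 1,1,1,1]

def mosseriSadocFrequencies (σ : K) : Fin 4 → K :=
  ![σ ^ 2, -σ ^ 3 / 2, (4 * σ + 3) / 2, -σ ^ 3]

lemma mosseriSadocFrequencies_eq_of_sq_eq_add_one (hσ : σ ^ 2 = σ + 1) :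
    mosseriSadocFrequencies σ = ![σ + 1, -(2 * σ + 1) / 2, (4 * σ + 3) / 2, -(2 * σ + 1)] := by
  rw [mosseriSadocFrequencies, hσ, pow_three_eq_of_sq_eq_add_one hσ]

theorem mosseriSadocInflationMatrix_mulVec_frequencies [CharZero K] (hσ : σ ^ 2 = σ + 1) :
    mosseriSadocInflationMatrix K *ᵥ mosseriSadocFrequencies σ =
      (1 - σ) ^ 3 • mosseriSadocFrequencies σ := by
  rw [mosseriSadocFrequencies_eq_of_sq_eq_add_one hσ, one_sub_pow_three_eq_of_sq_eq_add_one hσ]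
  ext i
  fin_cases i <;>
    simp only [mosseriSadocInflationMatrix, mulVec, dotProduct, Fin.sum_univ_four, Fin.reduceFinMk,
      Fin.zero_eta, Fin.mk_one, of_apply, cons_val, cons_val_zero, cons_val_one, cons_val_fin_one,
      cons_val', Pi.smul_apply, smul_eq_mul]
  -- each coefficient is twice the σ-coefficient of the entry: it cancels the σ² in (3 - 2σ) vᵢ
  · linear_combination 2 * hσ
  · linear_combination -2 * hσ
  · linear_combination 4 * hσ
  · linear_combination -4 * hσ

theorem sum_mosseriSadocFrequencies [CharZero K] (hσ : σ ^ 2 = σ + 1) :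
    ∑ i, mosseriSadocFrequencies σ i = 1 := by
  rw [mosseriSadocFrequencies_eq_of_sq_eq_add_one hσ, Fin.sum_univ_four]
  simp only [cons_val]
  ring

end MosseriSadoc

theorem right_PF_eigenvector
    (τ σ : ℝ) (hτ : τ = (1 + Real.sqrt 5) / 2) (hσ : σ = (1 - Real.sqrt 5) / 2)
    (M : Matrix (Fin 4) (Fin 4) ℝ)
    (hM : M = !![1,2,2,2; 0,2,1,0; 1,2,1,1; 1,1,1,1])
    (v : Fin 4 → ℝ)
    (hv : v = ![σ ^ 2, -σ ^ 3 / 2, (4 * σ + 3) / 2, -σ ^ 3]) :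
    M.mulVec v = τ ^ 3 • v ∧ v 0 + v 1 + v 2 + v 3 = 1 := by
  have hσ_sq : σ ^ 2 = σ + 1 := hσ ▸ Real.goldenConj_sq
  have hτσ : τ = 1 - σ := by rw [hτ, hσ]; ring
  subst hτσ hM hv
  refine ⟨mosseriSadocInflationMatrix_mulVec_frequencies hσ_sq, ?_⟩
  exact (Fin.sum_univ_four _).symm.trans (sum_mosseriSadocFrequencies hσ_sq)
end

section
/- The vector w = (2/(5τ+4))·(τ/2, τ², τ, 1), with τ = (1+√5)/2, satisfies Mᵀw = τ³w for M = [[1,2,2,2],[0,2,1,0],[1,2,1,1],[1,1,1,1]], and the entries of w sum to 1. -/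
/-!
Since `τ ^ 2 = τ + 1`, every power of `τ` reduces to a linear polynomial in `τ`
(`τ ^ 3 = 2τ + 1`, `τ ^ 4 = 3τ + 2`, `τ ^ 5 = 5τ + 3`), and with these reductions each coordinate
of `Mᵀ v = τ ^ 3 v` for `v = (τ/2, τ², τ, 1)` becomes a linear identity. The entries of `v` sum to
`(5τ + 4)/2`, which is exactly what the normalizing factor `2/(5τ + 4)` cancels.
-/

open Matrix

section GoldenEigenvector

variable {K : Type*} [Field K]

def mosseriSadocInflation : Matrix (Fin 4) (Fin 4) K :=
  !![1, 2, 2, 2; 0, 2, 1, 0; 1, 2, 1, 1; 1, 1, 1, 1]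

def goldenEigenvector (τ : K) : Fin 4 → K :=
  ![τ / 2, τ ^ 2, τ, 1]

theorem transpose_mulVec_goldenEigenvector [NeZero (2 : K)] {τ : K} (hτ : τ ^ 2 = τ + 1) :
    (mosseriSadocInflation : Matrix (Fin 4) (Fin 4) K)ᵀ *ᵥ goldenEigenvector τ =
      τ ^ 3 • goldenEigenvector τ := by
  ext i
  fin_cases i
  all_goals
    simp only [mosseriSadocInflation, goldenEigenvector, mulVec, dotProduct, Fin.sum_univ_four,
      transpose_apply, of_apply, Fin.zero_eta, Fin.mk_one, Fin.reduceFinMk, Fin.isValue, cons_val',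
      cons_val, cons_val_zero, cons_val_one, cons_val_fin_one, zero_mul, one_mul, mul_one,
      add_zero, Pi.smul_apply, smul_eq_mul]
    field_simp
  · linear_combination (-(τ ^ 2 + τ + 2)) * hτ
  · linear_combination (-(τ ^ 3 + τ ^ 2 + 2 * τ + 1)) * hτ
  · linear_combination (-(τ ^ 2 + τ + 1)) * hτ
  · linear_combination (-(τ + 1)) * hτ

theorem sum_goldenEigenvector [NeZero (2 : K)] {τ : K} (hτ : τ ^ 2 = τ + 1) :
    ∑ i, goldenEigenvector τ i = (5 * τ + 4) / 2 := by
  simp only [goldenEigenvector, Fin.sum_univ_four, Fin.isValue, cons_val_zero, cons_val_one,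
    cons_val]
  field_simp
  linear_combination 2 * hτ

end GoldenEigenvector

theorem left_PF_eigenvector
    (τ : ℝ) (hτ : τ = (1 + Real.sqrt 5) / 2)
    (M : Matrix (Fin 4) (Fin 4) ℝ)
    (hM : M = !![1,2,2,2; 0,2,1,0; 1,2,1,1; 1,1,1,1])
    (w : Fin 4 → ℝ)
    (hw : w = fun i => (2 / (5 * τ + 4)) * (![τ / 2, τ ^ 2, τ, 1] i)) :
    M.transpose.mulVec w = τ ^ 3 • w ∧ w 0 + w 1 + w 2 + w 3 = 1 := by
  have hgold : τ = Real.goldenRatio := hτ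
  have hsq : τ ^ 2 = τ + 1 := hgold ▸ Real.goldenRatio_sq
  have hnorm : 5 * τ + 4 ≠ 0 := by linarith [hgold ▸ Real.goldenRatio_pos]
  have hw' : w = (2 / (5 * τ + 4)) • goldenEigenvector τ := hw
  subst hM
  refine ⟨?_, ?_⟩
  · rw [hw', mulVec_smul, ← mosseriSadocInflation, transpose_mulVec_goldenEigenvector hsq,
      smul_comm]
  · have hsum := sum_goldenEigenvector hsq
    rw [Fin.sum_univ_four] at hsum
    simp only [hw', Pi.smul_apply, smul_eq_mul, ← mul_add, hsum]
    field_simp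
end

section
/- The sequence τ⁻³ⁿ Mⁿ converges (entrywise) to P as n → ∞, where M = [[1,2,2,2],[0,2,1,0],[1,2,1,1],[1,1,1,1]], τ = (1+√5)/2, and P is the Perron–Frobenius projection matrix given in the paper. -/
noncomputable def PFP (s : ℝ) : Matrix (Fin 4) (Fin 4) ℝ :=
  (1 / 30 : ℝ) • !![2*((1+s)/2+2), 4*(3*((1+s)/2)+1), 4*((1+s)/2+2), 4*s;
                    s, 2*((1+s)/2+2), 2*s, 2*(2+(1-s)/2);
                    5, 10*((1+s)/2), 10, -(10*((1-s)/2));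
                    2*s, 4*((1+s)/2+2), 4*s, 4*(2+(1-s)/2)]

noncomputable def PFQ (s : ℝ) : Matrix (Fin 4) (Fin 4) ℝ :=
  !![1/3 - s/15, -1/3 - s/5, -1/3 + s/15, 2*s/15;
     -s/15, 1/3 + 2*s/15, s/15, -1/6 - s/30;
     -1/6 + s/10, -1/6 - s/30, 1/6 - s/10, 1/6 - s/30;
     s/15, -1/3 - 2*s/15, -s/15, 1/6 + s/30]

noncomputable def PFR (s : ℝ) : Matrix (Fin 4) (Fin 4) ℝ :=
  !![1/3 + s/15, -1/3 + s/5, -1/3 - s/15, -(2*s)/15;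
     s/15, 1/3 - 2*s/15, -s/15, -1/6 + s/30;
     -1/6 - s/10, -1/6 + s/30, 1/6 + s/10, 1/6 + s/30;
     -s/15, -1/3 + 2*s/15, s/15, 1/6 - s/30]

noncomputable def PFS (s : ℝ) : Matrix (Fin 4) (Fin 4) ℝ :=
  !![1/6 - s/30, 1/3 - s/5, 1/3 - s/15, -(2*s)/15;
     -s/30, 1/6 - s/30, -s/15, 1/6 + s/30;
     1/6, 1/6 - s/6, 1/3, -1/6 - s/6;
     -s/15, 1/3 - s/15, -(2*s)/15, 1/3 + s/15]

def PFM : Matrix (Fin 4) (Fin 4) ℝ := !![1,2,2,2; 0,2,1,0; 1,2,1,1; 1,1,1,1]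

set_option maxHeartbeats 1000000 in
lemma PFP_mul (s : ℝ) (h5 : s ^ 2 = 5) : PFP s * PFM = (2 + s) • PFP s := by
  ext i j
  fin_cases i <;> fin_cases j <;>
    simp [PFP, PFM, Matrix.mul_apply, Fin.sum_univ_four, Matrix.vecHead,
      Matrix.vecTail] <;> nlinarith [h5]

set_option maxHeartbeats 1000000 in
lemma PFQ_mul (s : ℝ) (h5 : s ^ 2 = 5) : PFQ s * PFM = ((1 + s)/2) • PFQ s := by
  ext i j
  fin_cases i <;> fin_cases j <;>
    simp [PFQ, PFM, Matrix.mul_apply, Fin.sum_univ_four, Matrix.vecHead,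
      Matrix.vecTail] <;> nlinarith [h5]

set_option maxHeartbeats 1000000 in
lemma PFR_mul (s : ℝ) (h5 : s ^ 2 = 5) : PFR s * PFM = ((1 - s)/2) • PFR s := by
  ext i j
  fin_cases i <;> fin_cases j <;>
    simp [PFR, PFM, Matrix.mul_apply, Fin.sum_univ_four, Matrix.vecHead,
      Matrix.vecTail] <;> nlinarith [h5]

set_option maxHeartbeats 1000000 in
lemma PFS_mul (s : ℝ) (h5 : s ^ 2 = 5) : PFS s * PFM = (2 - s) • PFS s := by
  ext i j
  fin_cases i <;> fin_cases j <;>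
    simp [PFS, PFM, Matrix.mul_apply, Fin.sum_univ_four, Matrix.vecHead,
      Matrix.vecTail] <;> nlinarith [h5]

set_option maxHeartbeats 1000000 in
lemma PF_sum (s : ℝ) : PFP s + PFQ s + PFR s + PFS s = 1 := by
  ext i j
  fin_cases i <;> fin_cases j <;>
    simp [PFP, PFQ, PFR, PFS, Matrix.one_apply, Matrix.vecHead, Matrix.vecTail] <;> ring

lemma PF_key (s : ℝ) (h5 : s ^ 2 = 5) (n : ℕ) : PFM ^ n =
    ((2 + s) ^ n) • PFP s + (((1 + s)/2) ^ n) • PFQ s + (((1 - s)/2) ^ n) • PFR s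
      + ((2 - s) ^ n) • PFS s := by
  induction n with
  | zero => simpa using (PF_sum s).symm
  | succ n ih =>
    rw [pow_succ, ih, Matrix.add_mul, Matrix.add_mul, Matrix.add_mul,
      Matrix.smul_mul, Matrix.smul_mul, Matrix.smul_mul, Matrix.smul_mul,
      PFP_mul s h5, PFQ_mul s h5, PFR_mul s h5, PFS_mul s h5,
      smul_smul, smul_smul, smul_smul, smul_smul,
      ← pow_succ, ← pow_succ, ← pow_succ, ← pow_succ]

theorem PF_projection_limit
    (τ σ : ℝ) (hτ : τ = (1 + Real.sqrt 5) / 2) (hσ : σ = (1 - Real.sqrt 5) / 2)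
    (M P : Matrix (Fin 4) (Fin 4) ℝ)
    (hM : M = !![1,2,2,2; 0,2,1,0; 1,2,1,1; 1,1,1,1])
    (hP : P = (1 / 30 : ℝ) • !![2*(τ+2), 4*(3*τ+1), 4*(τ+2), 4*Real.sqrt 5;
                               Real.sqrt 5, 2*(τ+2), 2*Real.sqrt 5, 2*(2+σ);
                               5, 10*τ, 10, -10*σ;
                               2*Real.sqrt 5, 4*(τ+2), 4*Real.sqrt 5, 4*(2+σ)]) :
    Filter.Tendsto (fun n : ℕ => (τ ^ (3 * n))⁻¹ • M ^ n) Filter.atTop (nhds P) := by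
  set s : ℝ := Real.sqrt 5 with hs
  have h5 : s ^ 2 = 5 := Real.sq_sqrt (by norm_num)
  have hs2 : 2 < s := by nlinarith [Real.sqrt_nonneg 5]
  have hs3 : s < 3 := by nlinarith [Real.sqrt_nonneg 5]
  have hMM : M = PFM := by rw [hM]; rfl
  have hPP : P = PFP s := by
    rw [hP, PFP, hτ, hσ]
    norm_num
  have hτ3 : τ ^ 3 = 2 + s := by
    rw [hτ]
    linear_combination ((s + 3)/8) * h5
  have hdpos : (0:ℝ) < 2 + s := by linarith
  have hdne : (2 + s : ℝ) ≠ 0 := ne_of_gt hdpos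
  set a : ℝ := ((1 + s)/2) / (2 + s) with ha
  set b : ℝ := ((1 - s)/2) / (2 + s) with hb
  set c : ℝ := (2 - s) / (2 + s) with hc
  have heq : ∀ n : ℕ, (τ ^ (3 * n))⁻¹ • M ^ n
      = PFP s + a ^ n • PFQ s + b ^ n • PFR s + c ^ n • PFS s := by
    intro n
    rw [hMM, PF_key s h5 n, pow_mul, hτ3]
    have hpowne : ((2 + s : ℝ) ^ n) ≠ 0 := pow_ne_zero _ hdne
    rw [smul_add, smul_add, smul_add, smul_smul, smul_smul, smul_smul, smul_smul,
      inv_mul_cancel₀ hpowne, one_smul]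
    have e1 : ((2 + s : ℝ) ^ n)⁻¹ * ((1 + s)/2) ^ n = a ^ n := by
      have hea : a = (2 + s)⁻¹ * ((1 + s)/2) := by rw [ha]; ring
      rw [hea, mul_pow, inv_pow]
    have e2 : ((2 + s : ℝ) ^ n)⁻¹ * ((1 - s)/2) ^ n = b ^ n := by
      have heb : b = (2 + s)⁻¹ * ((1 - s)/2) := by rw [hb]; ring
      rw [heb, mul_pow, inv_pow]
    have e3 : ((2 + s : ℝ) ^ n)⁻¹ * (2 - s) ^ n = c ^ n := by
      have hec : c = (2 + s)⁻¹ * (2 - s) := by rw [hc]; ring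
      rw [hec, mul_pow, inv_pow]
    rw [e1, e2, e3]
  have habs : |a| < 1 := by
    rw [abs_lt]
    constructor
    · rw [lt_div_iff₀ hdpos]; nlinarith
    · rw [div_lt_one hdpos]; nlinarith
  have hbabs : |b| < 1 := by
    rw [abs_lt]
    constructor
    · rw [lt_div_iff₀ hdpos]; nlinarith
    · rw [div_lt_one hdpos]; nlinarith
  have hcabs : |c| < 1 := by
    rw [abs_lt]
    constructor
    · rw [lt_div_iff₀ hdpos]; nlinarith
    · rw [div_lt_one hdpos]; nlinarith
  have ta := (tendsto_pow_atTop_nhds_zero_of_abs_lt_one habs).smul_const (PFQ s)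
  have tb := (tendsto_pow_atTop_nhds_zero_of_abs_lt_one hbabs).smul_const (PFR s)
  have tc := (tendsto_pow_atTop_nhds_zero_of_abs_lt_one hcabs).smul_const (PFS s)
  have hlim : Filter.Tendsto
      (fun n : ℕ => PFP s + a ^ n • PFQ s + b ^ n • PFR s + c ^ n • PFS s)
      Filter.atTop (nhds (PFP s)) := by
    have h := (((tendsto_const_nhds : Filter.Tendsto (fun _ : ℕ => PFP s) Filter.atTop (nhds (PFP s))).add ta).add tb).add tc
    simpa using h
  rw [hPP]
  exact hlim.congr (fun n => (heq n).symm)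
end

section
/- The 4×4 matrix M̂ = [[2,3,3,1],[0,2,1,0],[1,2,1,0],[1,1,1,0]] has the same eigenvalues τ³, τ, σ, σ³ as M = [[1,2,2,2],[0,2,1,0],[1,2,1,1],[1,1,1,1]], where τ = (1+√5)/2, σ = (1−√5)/2. -/
/-! Both characteristic polynomials equal
`x⁴ - 5x³ + 2x² + 5x + 1 = (x² - x - 1)(x² - 4x - 1)`. The first factor has roots `τ, σ`;
since `τ + σ = 1` and `τσ = -1`, we get `τ³ + σ³ = 4` and `τ³σ³ = -1`, so the second factor
has roots `τ³, σ³`. -/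

open Polynomial Real

section CommRing

variable {R : Type*} [CommRing R]

theorem charpoly_inflationMatrix :
    (!![1,2,2,2; 0,2,1,0; 1,2,1,1; 1,1,1,1] : Matrix (Fin 4) (Fin 4) R).charpoly
      = X ^ 4 - 5 * X ^ 3 + 2 * X ^ 2 + 5 * X + 1 := by
  have hcharmatrix :
      Matrix.charmatrix (!![1,2,2,2; 0,2,1,0; 1,2,1,1; 1,1,1,1] : Matrix (Fin 4) (Fin 4) R)
        = !![X - 1, -2, -2, -2; 0, X - 2, -1, 0; -1, -2, X - 1, -1; -1, -1, -1, X - 1] := by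
    refine Matrix.ext fun i j => ?_
    fin_cases i <;> fin_cases j <;> simp [map_ofNat]
  rw [Matrix.charpoly, hcharmatrix]
  eval_det
  ring

theorem charpoly_modifiedInflationMatrix :
    (!![2,3,3,1; 0,2,1,0; 1,2,1,0; 1,1,1,0] : Matrix (Fin 4) (Fin 4) R).charpoly
      = X ^ 4 - 5 * X ^ 3 + 2 * X ^ 2 + 5 * X + 1 := by
  have hcharmatrix :
      Matrix.charmatrix (!![2,3,3,1; 0,2,1,0; 1,2,1,0; 1,1,1,0] : Matrix (Fin 4) (Fin 4) R)
        = !![X - 2, -3, -3, -1; 0, X - 2, -1, 0; -1, -2, X - 1, 0; -1, -1, -1, X] := by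
    refine Matrix.ext fun i j => ?_
    fin_cases i <;> fin_cases j <;> simp [map_ofNat]
  rw [Matrix.charpoly, hcharmatrix]
  eval_det
  ring

theorem X_sub_C_mul_X_sub_C (a b : R) :
    (X - C a) * (X - C b) = X ^ 2 - C (a + b) * X + C (a * b) := by
  simp only [map_add, map_mul]
  ring

theorem quartic_eq_prod_X_sub_C_of_add_eq_one_of_mul_eq_neg_one {t s : R}
    (hadd : t + s = 1) (hmul : t * s = -1) :
    (X ^ 4 - 5 * X ^ 3 + 2 * X ^ 2 + 5 * X + 1 : R[X])
      = (X - C (t ^ 3)) * (X - C t) * (X - C s) * (X - C (s ^ 3)) := by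
  have hcube_add : t ^ 3 + s ^ 3 = 4 := by
    linear_combination ((t + s) ^ 2 + (t + s) + 1 - 3 * t * s) * hadd - 3 * hmul
  have hcube_mul : t ^ 3 * s ^ 3 = -1 := by
    linear_combination (t ^ 2 * s ^ 2 - t * s + 1) * hmul
  calc (X ^ 4 - 5 * X ^ 3 + 2 * X ^ 2 + 5 * X + 1 : R[X])
      = (X ^ 2 - C (t + s) * X + C (t * s)) *
          (X ^ 2 - C (t ^ 3 + s ^ 3) * X + C (t ^ 3 * s ^ 3)) := by
        rw [hadd, hmul, hcube_add, hcube_mul, map_one, map_neg, map_one, map_ofNat]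
        ring
    _ = (X - C (t ^ 3)) * (X - C t) * (X - C s) * (X - C (s ^ 3)) := by
        rw [← X_sub_C_mul_X_sub_C, ← X_sub_C_mul_X_sub_C]
        ring

end CommRing

theorem isRoot_X_sub_C_mul_four_iff {R : Type*} [CommRing R] [IsDomain R] {a b c d x : R} :
    ((X - C a) * (X - C b) * (X - C c) * (X - C d)).IsRoot x ↔
      x = a ∨ x = b ∨ x = c ∨ x = d := by
  simp only [IsRoot.def, eval_mul, eval_sub, eval_X, eval_C, mul_eq_zero, sub_eq_zero, or_assoc]

theorem modified_inflation_matrix_same_eigenvalues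
    (τ σ : ℝ) (hτ : τ = (1 + Real.sqrt 5) / 2) (hσ : σ = (1 - Real.sqrt 5) / 2)
    (M M' : Matrix (Fin 4) (Fin 4) ℝ)
    (hM : M = !![1,2,2,2; 0,2,1,0; 1,2,1,1; 1,1,1,1])
    (hM' : M' = !![2,3,3,1; 0,2,1,0; 1,2,1,0; 1,1,1,0]) :
    (∀ x : ℝ, M'.charpoly.IsRoot x ↔ (x = τ ^ 3 ∨ x = τ ∨ x = σ ∨ x = σ ^ 3)) ∧
    (∀ x : ℝ, M.charpoly.IsRoot x ↔ (x = τ ^ 3 ∨ x = τ ∨ x = σ ∨ x = σ ^ 3)) := by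
  have hadd : τ + σ = 1 := hτ ▸ hσ ▸ goldenRatio_add_goldenConj
  have hmul : τ * σ = -1 := hτ ▸ hσ ▸ goldenRatio_mul_goldenConj
  have hfactor := quartic_eq_prod_X_sub_C_of_add_eq_one_of_mul_eq_neg_one hadd hmul
  subst hM hM'
  rw [charpoly_inflationMatrix, charpoly_modifiedInflationMatrix, hfactor]
  exact ⟨fun _ => isRoot_X_sub_C_mul_four_iff, fun _ => isRoot_X_sub_C_mul_four_iff⟩
end

section
/- The vector (1/2, σ²/4, (−3σ−1)/4, σ²/2), with σ = (1−√5)/2, is a right eigenvector of M̂ = [[2,3,3,1],[0,2,1,0],[1,2,1,0],[1,1,1,0]] with eigenvalue τ³ = ((1+√5)/2)³, and its entries sum to 1; in particular the first entry (relative frequency of tile T̂₁) equals exactly 1/2. -/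
theorem modified_right_PF_eigenvector
    (τ σ : ℝ) (hτ : τ = (1 + Real.sqrt 5) / 2) (hσ : σ = (1 - Real.sqrt 5) / 2)
    (M' : Matrix (Fin 4) (Fin 4) ℝ)
    (hM' : M' = !![2,3,3,1; 0,2,1,0; 1,2,1,0; 1,1,1,0])
    (v : Fin 4 → ℝ)
    (hv : v = ![1/2, σ ^ 2 / 4, (-3 * σ - 1) / 4, σ ^ 2 / 2]) :
    M'.mulVec v = τ ^ 3 • v ∧ v 0 + v 1 + v 2 + v 3 = 1 ∧ v 0 = 1 / 2 := by
  obtain ⟨s, hs, h5⟩ : ∃ s : ℝ, Real.sqrt 5 = s ∧ s ^ 2 = 5 :=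
    ⟨Real.sqrt 5, rfl, Real.sq_sqrt (by norm_num)⟩
  rw [hs] at hτ hσ
  subst hτ hσ hM' hv
  refine ⟨?_, by simp; nlinarith [h5], rfl⟩
  funext i
  fin_cases i <;>
    simp [Matrix.mulVec, dotProduct, Fin.sum_univ_succ]
  · nlinarith [h5]
  · linear_combination ((13 - 3*s - s^2 - s^3)/128) * h5
  · nlinarith [h5]
  · linear_combination ((1 - 3*s - s^2 - s^3)/64) * h5
end

section
/- The vector (1/(4τ), 1/2, 1/(2τ), 1/(4τ⁴)), with τ = (1+√5)/2, is a right eigenvector of M̂ᵀ with eigenvalue τ³, where M̂ = [[2,3,3,1],[0,2,1,0],[1,2,1,0],[1,1,1,0]], and its entries sum to 1. -/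
/-! After clearing denominators, each equation of the claim becomes a polynomial identity in `τ`
that is a multiple of `τ ^ 2 - τ - 1`; so it holds for either root of `x ^ 2 = x + 1`. -/

open Matrix

section GoldenRoot

variable {τ : ℝ}

lemma ne_zero_of_sq_eq_add_one (hτ : τ ^ 2 = τ + 1) : τ ≠ 0 := by
  rintro rfl
  norm_num at hτ

lemma transpose_mulVec_modifiedEigenvector (hτ : τ ^ 2 = τ + 1) :
    (!![2,3,3,1; 0,2,1,0; 1,2,1,0; 1,1,1,0] : Matrix (Fin 4) (Fin 4) ℝ)ᵀ *ᵥ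
        ![1 / (4 * τ), 1 / 2, 1 / (2 * τ), 1 / (4 * τ ^ 4)] =
      τ ^ 3 • ![1 / (4 * τ), 1 / 2, 1 / (2 * τ), 1 / (4 * τ ^ 4)] := by
  have hτ0 := ne_zero_of_sq_eq_add_one hτ
  ext i
  fin_cases i <;>
    simp only [mulVec, dotProduct, Fin.sum_univ_four, transpose_apply, of_apply, Pi.smul_apply,
      smul_eq_mul, Fin.zero_eta, Fin.mk_one, Fin.reduceFinMk, cons_val] <;>
    field_simp
  · linear_combination (-2 + 2 * τ - 4 * τ ^ 2 - 2 * τ ^ 3 - 2 * τ ^ 4) * hτ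
  · linear_combination (-2 + 2 * τ - 4 * τ ^ 2 - 8 * τ ^ 3 - 4 * τ ^ 4 - 4 * τ ^ 5) * hτ
  · linear_combination (-2 + 2 * τ - 4 * τ ^ 2 - 4 * τ ^ 3 - 4 * τ ^ 4) * hτ
  · ring

lemma modifiedEigenvector_sum (hτ : τ ^ 2 = τ + 1) :
    1 / (4 * τ) + 1 / 2 + 1 / (2 * τ) + 1 / (4 * τ ^ 4) = 1 := by
  have hτ0 := ne_zero_of_sq_eq_add_one hτ
  field_simp
  linear_combination (-2 + 2 * τ - 4 * τ ^ 2) * hτ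

end GoldenRoot

theorem modified_left_PF_eigenvector
    (τ : ℝ) (hτ : τ = (1 + Real.sqrt 5) / 2)
    (M' : Matrix (Fin 4) (Fin 4) ℝ)
    (hM' : M' = !![2,3,3,1; 0,2,1,0; 1,2,1,0; 1,1,1,0])
    (w : Fin 4 → ℝ)
    (hw : w = ![1 / (4 * τ), 1 / 2, 1 / (2 * τ), 1 / (4 * τ ^ 4)]) :
    M'.transpose.mulVec w = τ ^ 3 • w ∧ w 0 + w 1 + w 2 + w 3 = 1 := by
  have hgold : τ ^ 2 = τ + 1 := hτ ▸ Real.goldenRatio_sq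
  subst hM' hw
  exact ⟨transpose_mulVec_modifiedEigenvector hgold, modifiedEigenvector_sum hgold⟩
end

section
/- With tile volumes V(t₁)=1/12, V(t₂)=τ/12, V(t₃)=τ/12, V(t₄)=τ²/12, V(t₅)=τ²/12, V(t₆)=τ³/12, the volume of id(τ) = 12t₁ + 44t₂ + 36t₃ + 68t₄ + 56t₅ + 56t₆ equals τ³·(17τ+14)/3, i.e. τ³ times the volume of id(1) = 20t₄ + 24t₅ + 12t₆. -/
theorem inflated_icosidodecahedron_volume
    (τ : ℝ) (hτ : τ = (1 + Real.sqrt 5) / 2) :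
    12 * (1 / 12) + 44 * (τ / 12) + 36 * (τ / 12) + 68 * (τ ^ 2 / 12)
      + 56 * (τ ^ 2 / 12) + 56 * (τ ^ 3 / 12)
    = τ ^ 3 * ((17 * τ + 14) / 3) ∧
    τ ^ 3 * ((17 * τ + 14) / 3)
      = τ ^ 3 * (20 * (τ ^ 2 / 12) + 24 * (τ ^ 2 / 12) + 12 * (τ ^ 3 / 12)) := by
  have h5 : Real.sqrt 5 ^ 2 = 5 := Real.sq_sqrt (by norm_num)
  have h : τ ^ 2 = τ + 1 := by rw [hτ]; nlinarith [h5]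
  refine ⟨by linear_combination ((-17*τ^2-17*τ-3)/3) * h, by linear_combination (τ^3/12*(-12*τ-56)) * h⟩
end
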